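/- arXiv:1307.7119 — 5 statements merged into one kernel-verified Lean document; each statement's English description precedes it below -/
import Mathlib

section
/- Let A₀ be a unital C*-algebra, n a positive integer, and A = [a_ij] ∈ M_n(A₀). Let Â be the matricial norm of A, i.e. the n×n real matrix with (i,j) entry ‖a_ij‖. Then the spectral radius of A (as an element of the C*-algebra M_n(A₀)) is at most the spectral radius of the matrix Â: ρ(A) ≤ ρ(Â). -/
/-!
Entrywise, `‖(A ^ k) i j‖ ≤ (Â ^ k) i j` for `k ≥ 1`, by the triangle inequality and
submultiplicativity in `A₀`. The ℓ∞-operator norm of a matrix only sees the norms of its entries,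
so `‖A ^ k‖ ≤ ‖Â ^ k‖` in that norm, and Gelfand's formula turns this into the inequality of
spectral radii; the spectral radius itself does not depend on the choice of Banach algebra norm.
-/

open Filter

theorem spectrum.spectralRadius_le_of_eventually_nnnorm_pow_le
    {A B : Type*} [NormedRing A] [NormedAlgebra ℂ A] [CompleteSpace A]
    [NormedRing B] [NormedAlgebra ℂ B] [CompleteSpace B] {a : A} {b : B}
    (h : ∀ᶠ m in atTop, ‖a ^ m‖₊ ≤ ‖b ^ m‖₊) :
    spectralRadius ℂ a ≤ spectralRadius ℂ b :=
  le_of_tendsto_of_tendsto (pow_nnnorm_pow_one_div_tendsto_nhds_spectralRadius a)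
    (pow_nnnorm_pow_one_div_tendsto_nhds_spectralRadius b) <|
    h.mono fun _ hm => ENNReal.rpow_le_rpow (by exact_mod_cast hm) (by positivity)

namespace Matrix

variable {m n α β : Type*} [Fintype n]

theorem norm_pow_succ_apply_le [SeminormedRing α] [DecidableEq n] (A : Matrix n n α) (k : ℕ)
    (i j : n) : ‖(A ^ (k + 1)) i j‖ ≤ (A.map (‖·‖) ^ (k + 1)) i j := by
  induction k generalizing j with
  | zero => simp
  | succ k ih =>
    rw [pow_succ _ (k + 1), pow_succ _ (k + 1), mul_apply, mul_apply]
    refine (norm_sum_le _ _).trans (Finset.sum_le_sum fun l _ => ?_)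
    exact (norm_mul_le _ _).trans (mul_le_mul_of_nonneg_right (ih l) (norm_nonneg _))

open scoped Matrix.Norms.Operator

theorem linfty_opNNNorm_le_of_norm_apply_le [Fintype m] [SeminormedAddCommGroup α]
    [SeminormedAddCommGroup β] {A : Matrix m n α} {B : Matrix m n β}
    (h : ∀ i j, ‖A i j‖ ≤ ‖B i j‖) : ‖A‖₊ ≤ ‖B‖₊ := by
  rw [linfty_opNNNorm_def, linfty_opNNNorm_def]
  exact Finset.sup_mono_fun fun i _ => Finset.sum_le_sum fun j _ => h i j

theorem spectralRadius_le_of_norm_pow_succ_apply_le {𝔸 𝔹 : Type*}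
    [NormedRing 𝔸] [NormedAlgebra ℂ 𝔸] [CompleteSpace 𝔸]
    [NormedRing 𝔹] [NormedAlgebra ℂ 𝔹] [CompleteSpace 𝔹] [DecidableEq n]
    {A : Matrix n n 𝔸} {B : Matrix n n 𝔹}
    (h : ∀ k i j, ‖(A ^ (k + 1)) i j‖ ≤ ‖(B ^ (k + 1)) i j‖) :
    spectralRadius ℂ A ≤ spectralRadius ℂ B := by
  -- instance search does not unfold the operator-norm uniformity to the product one
  have : @CompleteSpace (Matrix n n 𝔸) PseudoMetricSpace.toUniformSpace :=
    inferInstanceAs (CompleteSpace (n → n → 𝔸))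
  have : @CompleteSpace (Matrix n n 𝔹) PseudoMetricSpace.toUniformSpace :=
    inferInstanceAs (CompleteSpace (n → n → 𝔹))
  refine spectrum.spectralRadius_le_of_eventually_nnnorm_pow_le ?_
  filter_upwards [eventually_ne_atTop 0] with k hk
  obtain ⟨k, rfl⟩ := Nat.exists_eq_succ_of_ne_zero hk
  exact linfty_opNNNorm_le_of_norm_apply_le (h k)

end Matrix

theorem matrix_spectralRadius_le_spectralRadius_of_matricial_norm_general
    {A₀ : Type*} [CStarAlgebra A₀] {n : ℕ}
    (A : Matrix (Fin n) (Fin n) A₀) :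
    spectralRadius ℂ A ≤
      spectralRadius ℂ (Matrix.of fun i j => (‖A i j‖ : ℂ) : Matrix (Fin n) (Fin n) ℂ) := by
  have hÂ : (Matrix.of fun i j => (‖A i j‖ : ℂ)) = Complex.ofRealHom.mapMatrix (A.map (‖·‖)) := by
    ext; rfl
  refine Matrix.spectralRadius_le_of_norm_pow_succ_apply_le fun k i j => ?_
  calc ‖(A ^ (k + 1)) i j‖ ≤ (A.map (‖·‖) ^ (k + 1)) i j := A.norm_pow_succ_apply_le k i j
    _ ≤ |(A.map (‖·‖) ^ (k + 1)) i j| := le_abs_self _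
    _ = ‖((Matrix.of fun i j => (‖A i j‖ : ℂ)) ^ (k + 1)) i j‖ := by
      rw [hÂ, ← map_pow, RingHom.mapMatrix_apply, Matrix.map_apply, Complex.ofRealHom_eq_coe,
        Complex.norm_real, Real.norm_eq_abs]

/-- For a matrix `A` over a unital C*-algebra `A₀`, the spectral radius of `A`
as an element of the C*-algebra `Mₙ(A₀)` is at most the spectral radius of the matricial norm
`Â = (‖a_ij‖)_{ij}` (viewed as a complex matrix, so that its full spectrum is accounted for). -/
theorem matrix_spectralRadius_le_spectralRadius_of_matricial_norm
    {A₀ : Type*} [CStarAlgebra A₀] {n : ℕ} (hn : 0 < n)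
    (A : Matrix (Fin n) (Fin n) A₀) :
    spectralRadius ℂ A ≤
      spectralRadius ℂ (Matrix.of fun i j => (‖A i j‖ : ℂ) : Matrix (Fin n) (Fin n) ℂ) :=
  matrix_spectralRadius_le_spectralRadius_of_matricial_norm_general A
end

section
/- Let A₀ be a unital C*-algebra and let A ∈ M_n(A₀) be selfadjoint (Hermitian) with bandwidth m ≥ 1 and with spectrum contained in the real interval [−1,1]. Let f : ℝ → ℝ be continuous on [−1,1], and let f(A) ∈ M_n(A₀) be defined by the continuous functional calculus for selfadjoint elements. Then for every k ≥ 0, every real polynomial p of degree at most k, and every pair of indices i, j with |i − j| > k·m, one has ‖[f(A)]_{ij}‖ ≤ sup_{x ∈ [−1,1]} |f(x) − p(x)|. -/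
/-! Powers of a matrix of bandwidth `m` satisfy `bw(A^d) ≤ d m`, so `p(A)` vanishes at every entry
with `|i - j| > k m`. There the entries of `f(A)` and `(f - p)(A)` agree, and an entry of a matrix over
a C⋆-algebra is bounded by the (unique) C⋆-norm of the matrix, which for `(f - p)(A)` is the
maximum of `|f - p|` over the spectrum. -/

open Polynomial

namespace Matrix

variable {R : Type*} {n : ℕ}

def BandedWith [Zero R] (m : ℕ) (A : Matrix (Fin n) (Fin n) R) : Prop :=
  ∀ i j : Fin n, (m : ℤ) < |(i : ℤ) - (j : ℤ)| → A i j = 0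

namespace BandedWith

lemma mono [Zero R] {a b : ℕ} {A : Matrix (Fin n) (Fin n) R} (hA : A.BandedWith a) (hab : a ≤ b) :
    A.BandedWith b :=
  fun i j hij => hA i j (lt_of_le_of_lt (by exact_mod_cast hab) hij)

lemma one [Zero R] [One R] : (1 : Matrix (Fin n) (Fin n) R).BandedWith 0 := by
  intro i j hij
  refine one_apply_ne ?_
  rintro rfl
  simp at hij

lemma mul [NonUnitalNonAssocSemiring R] {a b : ℕ} {A B : Matrix (Fin n) (Fin n) R}
    (hA : A.BandedWith a) (hB : B.BandedWith b) : (A * B).BandedWith (a + b) := by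
  intro i j hij
  rw [mul_apply]
  refine Finset.sum_eq_zero fun l _ => ?_
  by_cases hil : (a : ℤ) < |(i : ℤ) - (l : ℤ)|
  · rw [hA i l hil, zero_mul]
  · have hlj : (b : ℤ) < |(l : ℤ) - (j : ℤ)| := by
      have := abs_sub_le (i : ℤ) (l : ℤ) (j : ℤ)
      push_cast at hij
      omega
    rw [hB l j hlj, mul_zero]

lemma pow [Semiring R] {m : ℕ} {A : Matrix (Fin n) (Fin n) R} (hA : A.BandedWith m) (d : ℕ) :
    (A ^ d).BandedWith (d * m) := by
  induction d with
  | zero => simpa using one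
  | succ d ih => simpa [pow_succ, add_mul] using ih.mul hA

lemma aeval {S : Type*} [CommSemiring S] [Semiring R] [Algebra S R] {m k : ℕ}
    {A : Matrix (Fin n) (Fin n) R} (hA : A.BandedWith m) {p : S[X]} (hp : p.natDegree ≤ k) :
    (aeval A p).BandedWith (k * m) := by
  intro i j hij
  rw [aeval_eq_sum_range, sum_apply]
  refine Finset.sum_eq_zero fun d hd => ?_
  have hdk : d ≤ k := Nat.lt_succ_iff.mp (Finset.mem_range.mp hd) |>.trans hp
  rw [smul_apply, (hA.pow d).mono (Nat.mul_le_mul_right m hdk) i j hij, smul_zero]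

end BandedWith

lemma norm_apply_le_norm_starAlgHom {ι A B : Type*} [Fintype ι] [DecidableEq ι] [CStarAlgebra A]
    [CStarAlgebra B] (φ : Matrix ι ι A →⋆ₐ[ℂ] B) (hφ : Function.Injective φ)
    (M : Matrix ι ι A) (i j : ι) : ‖M i j‖ ≤ ‖φ M‖ := by
  -- Mathlib puts the C⋆-algebra structure on `CStarMatrix` only for ordered `A`; its norm does not
  -- depend on the order.
  let := CStarAlgebra.spectralOrder A
  let := CStarAlgebra.spectralOrderedRing A
  let ψ : CStarMatrix ι ι A →⋆ₐ[ℂ] B := φ.comp CStarMatrix.ofMatrixStarAlgEquiv.symm.toStarAlgHom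
  have hψ : Function.Injective ψ := hφ.comp CStarMatrix.ofMatrixStarAlgEquiv.symm.injective
  calc ‖M i j‖ ≤ ‖CStarMatrix.ofMatrix M‖ := CStarMatrix.norm_entry_le_norm
    _ = ‖φ M‖ := (NonUnitalStarAlgHom.norm_map ψ hψ _).symm

end Matrix

lemma cfc_eq_cfc_sub_add_aeval {A : Type*} [CStarAlgebra A] {a : A} (ha : IsSelfAdjoint a)
    {f : ℝ → ℝ} (hf : ContinuousOn f (spectrum ℝ a)) (p : ℝ[X]) :
    cfc f a = cfc (fun x => f x - p.eval x) a + aeval a p := by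
  rw [cfc_sub f _ a hf, cfc_polynomial p a ha, sub_add_cancel]

lemma norm_cfc_le_sSup_image {A : Type*} [CStarAlgebra A] {a : A} {s : Set ℝ} (hs : IsCompact s)
    (hσ : spectrum ℝ a ⊆ s) {g : ℝ → ℝ} (hg : ContinuousOn g s) :
    ‖cfc g a‖ ≤ sSup ((fun x => |g x|) '' s) := by
  have hbdd : BddAbove ((fun x => |g x|) '' s) := (hs.image_of_continuousOn hg.abs).bddAbove
  refine norm_cfc_le (Real.sSup_nonneg ?_) fun x hx => le_csSup hbdd ⟨x, hσ hx, rfl⟩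
  rintro _ ⟨x, -, rfl⟩
  exact abs_nonneg _

theorem norm_entry_cfc_le_best_approx_of_banded_selfAdjoint_general
    {A₀ : Type*} [CStarAlgebra A₀] {n : ℕ}
    {𝒜 : Type*} [CStarAlgebra 𝒜]
    (φ : Matrix (Fin n) (Fin n) A₀ ≃⋆ₐ[ℂ] 𝒜)
    (A : Matrix (Fin n) (Fin n) A₀) (hA : IsSelfAdjoint A)
    (hspec : spectrum ℝ A ⊆ Set.Icc (-1) 1)
    (m : ℕ)
    (hband : ∀ i j : Fin n, (m : ℤ) < |(i : ℤ) - (j : ℤ)| → A i j = 0)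
    (f : ℝ → ℝ) (hf : ContinuousOn f (Set.Icc (-1) 1))
    (k : ℕ) (p : Polynomial ℝ) (hp : p.degree ≤ k)
    (i j : Fin n) (hij : ((k * m : ℕ) : ℤ) < |(i : ℤ) - (j : ℤ)|) :
    ‖(φ.symm (cfc f (φ A))) i j‖ ≤
      sSup ((fun x => |f x - p.eval x|) '' Set.Icc (-1 : ℝ) 1) := by
  let e : Matrix (Fin n) (Fin n) A₀ ≃ₐ[ℝ] 𝒜 :=
    (AlgEquivClass.toAlgEquiv φ : _ ≃ₐ[ℂ] 𝒜).restrictScalars ℝ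
  have hσ : spectrum ℝ (φ A) ⊆ Set.Icc (-1) 1 := by
    rwa [← AlgEquiv.spectrum_eq e A] at hspec
  have hpoly : φ.symm (aeval (φ A) p) = aeval A p := by
    rw [show φ A = e A from rfl, aeval_algEquiv]
    exact φ.symm_apply_apply _
  have hzero : aeval A p i j = 0 :=
    Matrix.BandedWith.aeval hband (natDegree_le_iff_degree_le.mpr hp) i j hij
  calc ‖φ.symm (cfc f (φ A)) i j‖ = ‖φ.symm (cfc (fun x => f x - p.eval x) (φ A)) i j‖ := by
        rw [cfc_eq_cfc_sub_add_aeval (hA.map φ) (hf.mono hσ) p, map_add, hpoly, Matrix.add_apply,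
          hzero, add_zero]
    _ ≤ ‖cfc (fun x => f x - p.eval x) (φ A)‖ := by
        simpa only [StarAlgHom.coe_coe, StarAlgEquiv.apply_symm_apply] using
          Matrix.norm_apply_le_norm_starAlgHom (φ : _ →⋆ₐ[ℂ] 𝒜) φ.injective
            (φ.symm (cfc (fun x => f x - p.eval x) (φ A))) i j
    _ ≤ _ := norm_cfc_le_sSup_image isCompact_Icc hσ (hf.sub p.continuousOn)

/-- Let `A ∈ Mₙ(A₀)` be Hermitian with bandwidth `m ≥ 1` and spectrum in
`[-1,1]`, and let `f : ℝ → ℝ` be continuous on `[-1,1]`.  (The C*-algebra `Mₙ(A₀)` is realized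
via a *-isomorphism `φ` onto a C*-algebra `𝒜`, and `f(A)` is `φ.symm (cfc f (φ A))`, i.e. the
continuous functional calculus applied to `A`.)  Then for every `k ≥ 0`, every real polynomial
`p` of degree at most `k`, and all indices `i, j` with `|i - j| > k·m`,
`‖[f(A)]_{ij}‖ ≤ sup_{x ∈ [-1,1]} |f(x) - p(x)|`. -/
theorem norm_entry_cfc_le_best_approx_of_banded_selfAdjoint
    {A₀ : Type*} [CStarAlgebra A₀] {n : ℕ}
    {𝒜 : Type*} [CStarAlgebra 𝒜]
    (φ : Matrix (Fin n) (Fin n) A₀ ≃⋆ₐ[ℂ] 𝒜)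
    (A : Matrix (Fin n) (Fin n) A₀) (hA : IsSelfAdjoint A)
    (hspec : spectrum ℝ A ⊆ Set.Icc (-1) 1)
    (m : ℕ) (hm : 1 ≤ m)
    (hband : ∀ i j : Fin n, (m : ℤ) < |(i : ℤ) - (j : ℤ)| → A i j = 0)
    (f : ℝ → ℝ) (hf : ContinuousOn f (Set.Icc (-1) 1))
    (k : ℕ) (p : Polynomial ℝ) (hp : p.degree ≤ k)
    (i j : Fin n) (hij : ((k * m : ℕ) : ℤ) < |(i : ℤ) - (j : ℤ)|) :
    ‖(φ.symm (cfc f (φ A))) i j‖ ≤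
      sSup ((fun x => |f x - p.eval x|) '' Set.Icc (-1 : ℝ) 1) :=
  norm_entry_cfc_le_best_approx_of_banded_selfAdjoint_general φ A hA hspec m hband f hf k p hp i j
    hij
end

section
/- Let A₀ be a unital C*-algebra and let A ∈ M_n(A₀) be selfadjoint (Hermitian) with bandwidth m ≥ 1 and with spectrum contained in [−1,1]. Let f : ℝ → ℝ be continuous on [−1,1] and suppose there exist constants c₀ > 0 and 0 < ξ < 1 such that for every integer k ≥ 0 there is a real polynomial p_k of degree at most k with sup_{x∈[−1,1]} |f(x) − p_k(x)| ≤ c₀ ξ^{k+1}. Then for all indices i, j, ‖[f(A)]_{ij}‖ ≤ C · ξ^{|i−j|/m}, where C = max{‖f(A)‖, c₀} and f(A) is defined by the continuous functional calculus; in particular the entries of f(A) decay exponentially away from the main diagonal at the rate ζ = ξ^{1/m} ∈ (0,1). -/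
/-!
Every power `A ^ l` with `l ≤ k` has bandwidth at most `k * m`, so a polynomial `p` of degree
`≤ k` in `A` has a vanishing `(i, j)` entry as soon as `k * m < |i - j|`. Hence
`f(A)ᵢⱼ = (f(A) - p(A))ᵢⱼ`, and an entry of a matrix over a C⋆-algebra is bounded by its C⋆-norm,
which for `f(A) - p(A)` is at most `sup_{[-1,1]} |f - p| ≤ c₀ ξ^(k+1)`. Choosing the largest
admissible `k` gives `k + 1 ≥ |i - j| / m`.
-/

open Polynomial

namespace Matrix

variable {α : Type*} {n : ℕ}

def IsBanded [Zero α] (A : Matrix (Fin n) (Fin n) α) (m : ℕ) : Prop :=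
  ∀ i j : Fin n, (m : ℤ) < |(i : ℤ) - (j : ℤ)| → A i j = 0

theorem IsBanded.mono [Zero α] {A : Matrix (Fin n) (Fin n) α} {a b : ℕ} (hA : A.IsBanded a)
    (hab : a ≤ b) : A.IsBanded b :=
  fun i j hij => hA i j (lt_of_le_of_lt (by exact_mod_cast hab) hij)

theorem isBanded_one [Zero α] [One α] : (1 : Matrix (Fin n) (Fin n) α).IsBanded 0 := by
  intro i j hij
  refine one_apply_ne fun h => ?_
  simp [h] at hij

theorem IsBanded.mul [NonUnitalNonAssocSemiring α] {A B : Matrix (Fin n) (Fin n) α} {a b : ℕ}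
    (hA : A.IsBanded a) (hB : B.IsBanded b) : (A * B).IsBanded (a + b) := by
  intro i j hij
  rw [mul_apply]
  refine Finset.sum_eq_zero fun l _ => ?_
  have htri := abs_sub_le (i : ℤ) (l : ℤ) (j : ℤ)
  by_cases hil : (a : ℤ) < |(i : ℤ) - l|
  · rw [hA i l hil, zero_mul]
  · rw [hB l j (by push_cast at hij; omega), mul_zero]

theorem IsBanded.pow [Semiring α] {A : Matrix (Fin n) (Fin n) α} {m : ℕ} (hA : A.IsBanded m)
    (k : ℕ) : (A ^ k).IsBanded (k * m) := by
  induction k with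
  | zero => simpa using isBanded_one
  | succ k ih => simpa [pow_succ, Nat.succ_mul] using ih.mul hA

theorem IsBanded.aeval {R : Type*} [CommSemiring R] [Semiring α] [Algebra R α]
    {A : Matrix (Fin n) (Fin n) α} {m : ℕ} (hA : A.IsBanded m) {p : R[X]} {k : ℕ}
    (hp : p.natDegree ≤ k) : (aeval A p).IsBanded (k * m) := by
  intro i j hij
  rw [aeval_eq_sum_range, sum_apply]
  refine Finset.sum_eq_zero fun l hl => ?_
  have hlk : l ≤ k := by rw [Finset.mem_range] at hl; omega
  rw [smul_apply, (hA.pow l).mono (Nat.mul_le_mul_right m hlk) i j hij, smul_zero]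

theorem norm_apply_le_norm_of_starAlgEquiv {ι A₀ B : Type*} [Fintype ι] [DecidableEq ι]
    [CStarAlgebra A₀] [NonUnitalCStarAlgebra B] (ψ : Matrix ι ι A₀ ≃⋆ₐ[ℂ] B)
    (N : Matrix ι ι A₀) (i j : ι) : ‖N i j‖ ≤ ‖ψ N‖ := by
  -- the C⋆-norm of `CStarMatrix` is only set up over a star-ordered coefficient algebra
  let _ := CStarAlgebra.spectralOrder A₀
  let _ := CStarAlgebra.spectralOrderedRing A₀
  calc ‖N i j‖ = ‖CStarMatrix.ofMatrixStarAlgEquiv N i j‖ := rfl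
    _ ≤ ‖CStarMatrix.ofMatrixStarAlgEquiv N‖ := CStarMatrix.norm_entry_le_norm
    _ = ‖ψ N‖ := by
      rw [← StarAlgEquiv.norm_map (CStarMatrix.ofMatrixStarAlgEquiv.symm.trans ψ)]
      simp

end Matrix

theorem StarAlgEquiv.symm_aeval_apply {R S A B : Type*} [CommSemiring R] [CommSemiring S]
    [Semiring A] [Semiring B] [Algebra R A] [Algebra R B] [Algebra S A] [Algebra S B]
    [Star A] [Star B] [Algebra S R] [IsScalarTower S R A] [IsScalarTower S R B]
    (φ : A ≃⋆ₐ[R] B) (a : A) (p : S[X]) : φ.symm (aeval (φ a) p) = aeval a p := by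
  simpa using (aeval_algHom_apply (φ.symm.restrictScalars S) (φ a) p).symm

theorem norm_cfc_sub_aeval_le {𝕜 A : Type*} {P : A → Prop} [RCLike 𝕜] [NormedRing A]
    [StarRing A] [NormedAlgebra 𝕜 A] [IsometricContinuousFunctionalCalculus 𝕜 A P]
    {a : A} (ha : P a) {f : 𝕜 → 𝕜} (hf : ContinuousOn f (spectrum 𝕜 a)) {p : 𝕜[X]} {ε : ℝ}
    (hε : 0 ≤ ε) (h : ∀ x ∈ spectrum 𝕜 a, ‖f x - p.eval x‖ ≤ ε) :
    ‖cfc f a - aeval a p‖ ≤ ε := by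
  rw [← cfc_polynomial p a, ← cfc_sub f _ a hf p.continuous.continuousOn]
  exact norm_cfc_le hε h

theorem Nat.exists_mul_lt_and_div_le_succ {D m : ℕ} (hD : 0 < D) (hm : 0 < m) :
    ∃ k : ℕ, k * m < D ∧ (D : ℝ) / m ≤ k + 1 := by
  refine ⟨(D - 1) / m, by have := Nat.div_mul_le_self (D - 1) m; omega, ?_⟩
  have hmod := Nat.mod_lt (D - 1) hm
  have hdiv := Nat.div_add_mod (D - 1) m
  rw [div_le_iff₀ (by exact_mod_cast hm)]
  exact_mod_cast (by rw [Nat.succ_mul, mul_comm]; omega : D ≤ ((D - 1) / m + 1) * m)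

/-- Let `A ∈ Mₙ(A₀)` be Hermitian with bandwidth `m ≥ 1` and spectrum in
`[-1,1]`; let `f : ℝ → ℝ` be continuous on `[-1,1]` and suppose there are `c₀ > 0`,
`0 < ξ < 1` such that for each `k` some real polynomial of degree at most `k` approximates
`f` on `[-1,1]` within `c₀ ξ^{k+1}`.  Then, with `f(A) = φ.symm (cfc f (φ A))` (continuous
functional calculus, the C*-structure of `Mₙ(A₀)` being realized via the *-isomorphism `φ`),
`‖[f(A)]_{ij}‖ ≤ max{‖f(A)‖, c₀} · ξ^{|i-j|/m}` for all `i, j`. -/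
theorem norm_entry_cfc_le_exp_decay_of_banded_selfAdjoint
    {A₀ : Type*} [CStarAlgebra A₀] {n : ℕ}
    {𝒜 : Type*} [CStarAlgebra 𝒜]
    (φ : Matrix (Fin n) (Fin n) A₀ ≃⋆ₐ[ℂ] 𝒜)
    (A : Matrix (Fin n) (Fin n) A₀) (hA : IsSelfAdjoint A)
    (hspec : spectrum ℝ A ⊆ Set.Icc (-1) 1)
    (m : ℕ) (hm : 1 ≤ m)
    (hband : ∀ i j : Fin n, (m : ℤ) < |(i : ℤ) - (j : ℤ)| → A i j = 0)
    (f : ℝ → ℝ) (hf : ContinuousOn f (Set.Icc (-1) 1))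
    (c₀ ξ : ℝ) (hc₀ : 0 < c₀) (hξ₀ : 0 < ξ) (hξ₁ : ξ < 1)
    (happrox : ∀ k : ℕ, ∃ p : Polynomial ℝ, p.degree ≤ k ∧
      ∀ x ∈ Set.Icc (-1 : ℝ) 1, |f x - p.eval x| ≤ c₀ * ξ ^ (k + 1))
    (i j : Fin n) :
    ‖(φ.symm (cfc f (φ A))) i j‖ ≤
      max ‖cfc f (φ A)‖ c₀ * ξ ^ (|((i : ℕ) : ℝ) - ((j : ℕ) : ℝ)| / (m : ℝ)) := by
  have hφA : IsSelfAdjoint (φ A) := hA.map φ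
  have hspecφ : spectrum ℝ (φ A) ⊆ Set.Icc (-1) 1 :=
    (AlgEquiv.spectrum_eq (φ.restrictScalars ℝ) A).trans_subset hspec
  set D := ((i : ℤ) - j).natAbs with hD
  have hdist : |((i : ℕ) : ℝ) - ((j : ℕ) : ℝ)| = D := by
    rw [hD, Nat.cast_natAbs, Int.cast_abs, Int.cast_sub, Int.cast_natCast, Int.cast_natCast]
  have hentry (N : 𝒜) : ‖(φ.symm N) i j‖ ≤ ‖N‖ := by
    simpa using Matrix.norm_apply_le_norm_of_starAlgEquiv φ (φ.symm N) i j
  rw [hdist]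
  obtain hD0 | hD0 := Nat.eq_zero_or_pos D
  · simpa [hD0] using (hentry _).trans (le_max_left _ c₀)
  obtain ⟨k, hkD, hDk⟩ := Nat.exists_mul_lt_and_div_le_succ hD0 hm
  obtain ⟨p, hpdeg, hp⟩ := happrox k
  have hpij : (aeval A p) i j = 0 := by
    refine Matrix.IsBanded.aeval hband (natDegree_le_of_degree_le hpdeg) i j ?_
    rw [← Int.natCast_natAbs, ← hD]
    exact_mod_cast hkD
  calc ‖(φ.symm (cfc f (φ A))) i j‖ = ‖(φ.symm (cfc f (φ A) - aeval (φ A) p)) i j‖ := by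
        rw [map_sub, StarAlgEquiv.symm_aeval_apply, Matrix.sub_apply, hpij, sub_zero]
    _ ≤ c₀ * ξ ^ (k + 1) :=
        (hentry _).trans <| norm_cfc_sub_aeval_le hφA (hf.mono hspecφ) (by positivity)
          fun x hx => hp x (hspecφ hx)
    _ ≤ c₀ * ξ ^ ((D : ℝ) / m) := by
        rw [← Real.rpow_natCast]
        refine mul_le_mul_of_nonneg_left ?_ hc₀.le
        exact Real.rpow_le_rpow_of_exponent_ge hξ₀ hξ₁.le (by exact_mod_cast hDk)
    _ ≤ max ‖cfc f (φ A)‖ c₀ * ξ ^ ((D : ℝ) / m) := by gcongr; exact le_max_right _ _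
end

section
/- Let A₀ be a unital C*-algebra and let A ∈ M_n(A₀) be a normal matrix (A A* = A* A) with bandwidth m ≥ 1. Let f : ℂ → ℂ be continuous on the spectrum σ(A), and let f(A) be defined by the continuous functional calculus for normal elements. Then for every k ≥ 0, every complex polynomial p of degree at most k, and every pair of indices i, j with |i − j| > k·m, one has ‖[f(A)]_{ij}‖ ≤ sup_{z ∈ σ(A)} |f(z) − p(z)|. -/
/-!
Subtracting `p(A)` does not change the `(i, j)` entry: `p(A)` is a combination of powers `Aᵈ` with
`d ≤ k`, and `Aᵈ` has bandwidth `d·m < |i - j|`. So `[f(A)]ᵢⱼ = [(f - p)(A)]ᵢⱼ`. In any faithful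
*-representation of the matrix algebra an entry is bounded by the norm of the matrix, since
`Eᵢᵢ M Eⱼᵢ = Mᵢⱼ Eᵢᵢ`, the corner `a ↦ a Eᵢᵢ` is isometric and the matrix units have norm `≤ 1`. Finally
`‖(f - p)(A)‖ = sup_{σ(A)} |f - p|` by the isometric functional calculus.
-/

namespace Matrix

def HasBandwidth {R : Type*} [Zero R] {n : ℕ} (A : Matrix (Fin n) (Fin n) R) (m : ℕ) : Prop :=
  ∀ i j : Fin n, (m : ℤ) < |(i : ℤ) - (j : ℤ)| → A i j = 0

namespace HasBandwidth

variable {R : Type*} {n : ℕ}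

lemma mono [Zero R] {A : Matrix (Fin n) (Fin n) R} {m m' : ℕ} (hA : A.HasBandwidth m)
    (hm : m ≤ m') : A.HasBandwidth m' :=
  fun i j h ↦ hA i j (lt_of_le_of_lt (by exact_mod_cast hm) h)

lemma one [Zero R] [One R] : (1 : Matrix (Fin n) (Fin n) R).HasBandwidth 0 :=
  fun i j h ↦ one_apply_ne (by rintro rfl; simp at h)

lemma mul [NonUnitalNonAssocSemiring R] {A B : Matrix (Fin n) (Fin n) R} {a b : ℕ}
    (hA : A.HasBandwidth a) (hB : B.HasBandwidth b) : (A * B).HasBandwidth (a + b) := by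
  intro i j h
  rw [mul_apply]
  refine Finset.sum_eq_zero fun l _ ↦ ?_
  by_cases hil : (a : ℤ) < |(i : ℤ) - l|
  · rw [hA i l hil, zero_mul]
  · have hlj : (b : ℤ) < |(l : ℤ) - j| := by
      have := abs_sub_le (i : ℤ) l j
      push_cast at h
      linarith
    rw [hB l j hlj, mul_zero]

lemma pow [Semiring R] {A : Matrix (Fin n) (Fin n) R} {m : ℕ} (hA : A.HasBandwidth m) (d : ℕ) :
    (A ^ d).HasBandwidth (d * m) := by
  induction d with
  | zero => simpa using one
  | succ d ih => simpa [pow_succ, add_mul] using ih.mul hA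

lemma smul {S : Type*} [Zero R] [SMulZeroClass S R] {A : Matrix (Fin n) (Fin n) R} {m : ℕ}
    (hA : A.HasBandwidth m) (c : S) : (c • A).HasBandwidth m :=
  fun i j h ↦ by rw [smul_apply, hA i j h, smul_zero]

lemma sum [AddCommMonoid R] {α : Type*} {s : Finset α} {F : α → Matrix (Fin n) (Fin n) R} {m : ℕ}
    (hF : ∀ x ∈ s, (F x).HasBandwidth m) : (∑ x ∈ s, F x).HasBandwidth m :=
  fun i j h ↦ by rw [sum_apply]; exact Finset.sum_eq_zero fun x hx ↦ hF x hx i j h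

lemma aeval {S : Type*} [CommSemiring S] [Semiring R] [Algebra S R]
    {A : Matrix (Fin n) (Fin n) R} {m : ℕ} (hA : A.HasBandwidth m) {p : Polynomial S} {k : ℕ}
    (hp : p.natDegree ≤ k) : (Polynomial.aeval A p).HasBandwidth (k * m) := by
  rw [Polynomial.aeval_eq_sum_range' (Nat.lt_succ_of_le hp)]
  refine sum fun d hd ↦ ((hA.pow d).smul _).mono ?_
  exact Nat.mul_le_mul_right m (Nat.lt_succ_iff.mp (Finset.mem_range.mp hd))

end HasBandwidth


variable {ι : Type*} [Fintype ι] [DecidableEq ι]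

@[simps]
def singleNonUnitalStarAlgHom (R : Type*) {A : Type*} [CommSemiring R] [NonUnitalSemiring A]
    [StarRing A] [Module R A] (l : ι) : A →⋆ₙₐ[R] Matrix ι ι A where
  toFun := single l l
  map_smul' c a := (smul_single c l l a).symm
  map_zero' := single_zero l l
  map_add' := single_add l l
  map_mul' a b := (single_mul_single_same (c := a) l l l b).symm
  map_star' a := by simp [star_eq_conjTranspose]

variable {A₀ 𝒜 : Type*} [CStarAlgebra A₀] [CStarAlgebra 𝒜]
  (φ : Matrix ι ι A₀ →⋆ₙₐ[ℂ] 𝒜) (hφ : Function.Injective φ)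
include hφ

lemma norm_map_single_same (l : ι) (a : A₀) : ‖φ (single l l a)‖ = ‖a‖ :=
  NonUnitalStarAlgHom.norm_map (φ.comp (singleNonUnitalStarAlgHom ℂ l))
    (hφ.comp fun a b h ↦ by simpa using congr_fun₂ h l l) a

lemma norm_map_single_one_le (i j : ι) : ‖φ (single i j (1 : A₀))‖ ≤ 1 := by
  have hsq : ‖φ (single i j (1 : A₀))‖ * ‖φ (single i j (1 : A₀))‖ = ‖(1 : A₀)‖ := by
    rw [← CStarRing.norm_star_mul_self, ← map_star, star_eq_conjTranspose, conjTranspose_single,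
      ← map_mul, single_mul_single_same, star_one, one_mul, norm_map_single_same φ hφ]
  have hone : ‖(1 : A₀)‖ ≤ 1 := by
    nontriviality A₀
    exact CStarRing.norm_one.le
  nlinarith [norm_nonneg (φ (single i j (1 : A₀)))]

lemma norm_apply_le_norm_map (M : Matrix ι ι A₀) (i j : ι) : ‖M i j‖ ≤ ‖φ M‖ :=
  calc ‖M i j‖ = ‖φ (single i i 1 * M * single j i 1)‖ := by
        rw [single_mul_mul_single, one_mul, mul_one, norm_map_single_same φ hφ]
    _ ≤ ‖φ (single i i 1)‖ * ‖φ M‖ * ‖φ (single j i 1)‖ := by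
        rw [map_mul, map_mul]; exact norm_mul₃_le
    _ ≤ 1 * ‖φ M‖ * 1 := by
        gcongr
        exacts [norm_map_single_one_le φ hφ i i, norm_map_single_one_le φ hφ j i]
    _ = ‖φ M‖ := by ring

end Matrix

section

variable {𝕜 A : Type*} {q : outParam (A → Prop)} [RCLike 𝕜] [NormedRing A] [StarRing A]
  [NormedAlgebra 𝕜 A] [IsometricContinuousFunctionalCalculus 𝕜 A q]

lemma norm_cfc_le_sSup_image_s7 (f : 𝕜 → 𝕜) (a : A) (hf : ContinuousOn f (spectrum 𝕜 a)) :
    ‖cfc f a‖ ≤ sSup ((fun x ↦ ‖f x‖) '' spectrum 𝕜 a) :=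
  norm_cfc_le (Real.sSup_nonneg (by rintro - ⟨x, -, rfl⟩; exact norm_nonneg _)) fun x hx ↦
    le_csSup ((ContinuousFunctionalCalculus.isCompact_spectrum a).bddAbove_image hf.norm)
      ⟨x, hx, rfl⟩

end

section

variable {𝕜 A : Type*} {q : outParam (A → Prop)} [RCLike 𝕜] [Ring A] [StarRing A]
  [TopologicalSpace A] [Algebra 𝕜 A] [ContinuousFunctionalCalculus 𝕜 A q]

lemma cfc_eq_cfc_sub_eval_add_aeval (f : 𝕜 → 𝕜) (a : A) (p : Polynomial 𝕜)
    (hf : ContinuousOn f (spectrum 𝕜 a) := by cfc_cont_tac) (ha : q a := by cfc_tac) :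
    cfc f a = cfc (fun z ↦ f z - p.eval z) a + Polynomial.aeval a p := by
  rw [cfc_sub f (fun z ↦ p.eval z) a, cfc_polynomial p a, sub_add_cancel]

end

open Polynomial in
theorem norm_entry_cfc_le_best_approx_of_banded_normal_general
    {A₀ : Type*} [CStarAlgebra A₀] {n : ℕ}
    {𝒜 : Type*} [CStarAlgebra 𝒜]
    (φ : Matrix (Fin n) (Fin n) A₀ ≃⋆ₐ[ℂ] 𝒜)
    (A : Matrix (Fin n) (Fin n) A₀) (hA : IsStarNormal A)
    (m : ℕ)
    (hband : ∀ i j : Fin n, (m : ℤ) < |(i : ℤ) - (j : ℤ)| → A i j = 0)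
    (f : ℂ → ℂ) (hf : ContinuousOn f (spectrum ℂ A))
    (k : ℕ) (p : Polynomial ℂ) (hp : p.degree ≤ k)
    (i j : Fin n) (hij : ((k * m : ℕ) : ℤ) < |(i : ℤ) - (j : ℤ)|) :
    ‖(φ.symm (cfc f (φ A))) i j‖ ≤
      sSup ((fun z => ‖f z - p.eval z‖) '' spectrum ℂ A) := by
  have hspec : spectrum ℂ (φ A) = spectrum ℂ A := AlgEquiv.spectrum_eq φ A
  have hφA : IsStarNormal (φ A) := hA.map φ
  have hf' : ContinuousOn f (spectrum ℂ (φ A)) := hspec ▸ hf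
  set g : ℂ → ℂ := fun z ↦ f z - p.eval z
  have hpA : aeval A p i j = 0 :=
    Matrix.HasBandwidth.aeval hband (natDegree_le_iff_degree_le.mpr hp) i j hij
  have hentry : φ.symm (cfc f (φ A)) i j = φ.symm (cfc g (φ A)) i j := by
    rw [cfc_eq_cfc_sub_eval_add_aeval f (φ A) p, map_add, aeval_algHom_apply, φ.symm_apply_apply,
      Matrix.add_apply, hpA, add_zero]
  calc ‖φ.symm (cfc f (φ A)) i j‖ = ‖φ.symm (cfc g (φ A)) i j‖ := by rw [hentry]
    _ ≤ ‖φ (φ.symm (cfc g (φ A)))‖ :=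
        Matrix.norm_apply_le_norm_map (φ : Matrix (Fin n) (Fin n) A₀ →⋆ₙₐ[ℂ] 𝒜) φ.injective _ i j
    _ = ‖cfc g (φ A)‖ := by rw [φ.apply_symm_apply]
    _ ≤ sSup ((fun z ↦ ‖g z‖) '' spectrum ℂ A) :=
        hspec ▸ norm_cfc_le_sSup_image_s7 g (φ A) (hf'.sub (Polynomial.continuousOn _))

/-- Let `A ∈ Mₙ(A₀)` be a *normal* matrix with bandwidth `m ≥ 1`, and let
`f : ℂ → ℂ` be continuous on `σ(A)`.  (The C*-algebra `Mₙ(A₀)` is realized via a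
*-isomorphism `φ` onto a C*-algebra `𝒜`, and `f(A) = φ.symm (cfc f (φ A))` is given by the
continuous functional calculus for normal elements; note `σ(φ A) = σ(A)`.)  Then for every
`k ≥ 0`, every complex polynomial `p` of degree at most `k`, and all `i, j` with
`|i - j| > k·m`, `‖[f(A)]_{ij}‖ ≤ sup_{z ∈ σ(A)} |f(z) - p(z)|`. -/
theorem norm_entry_cfc_le_best_approx_of_banded_normal
    {A₀ : Type*} [CStarAlgebra A₀] {n : ℕ}
    {𝒜 : Type*} [CStarAlgebra 𝒜]
    (φ : Matrix (Fin n) (Fin n) A₀ ≃⋆ₐ[ℂ] 𝒜)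
    (A : Matrix (Fin n) (Fin n) A₀) (hA : IsStarNormal A)
    (m : ℕ) (hm : 1 ≤ m)
    (hband : ∀ i j : Fin n, (m : ℤ) < |(i : ℤ) - (j : ℤ)| → A i j = 0)
    (f : ℂ → ℂ) (hf : ContinuousOn f (spectrum ℂ A))
    (k : ℕ) (p : Polynomial ℂ) (hp : p.degree ≤ k)
    (i j : Fin n) (hij : ((k * m : ℕ) : ℤ) < |(i : ℤ) - (j : ℤ)|) :
    ‖(φ.symm (cfc f (φ A))) i j‖ ≤
      sSup ((fun z => ‖f z - p.eval z‖) '' spectrum ℂ A) :=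
  norm_entry_cfc_le_best_approx_of_banded_normal_general φ A hA m hband f hf k p hp i j hij
end

section
/- Let A₀ be a unital C*-algebra, let G be a simple graph on {1,…,n}, and let A ∈ M_n(A₀) be selfadjoint with sparsity pattern compatible with G (for i ≠ j, a_ij ≠ 0 implies i and j are adjacent in G) and with spectrum contained in [−1,1]. Let f : ℝ → ℝ be continuous on [−1,1], and let f(A) be defined by the continuous functional calculus. Then for every k ≥ 0, every real polynomial p of degree at most k, and every pair of indices i ≠ j such that there is no walk in G from i to j of length at most k, one has ‖[f(A)]_{ij}‖ ≤ sup_{x ∈ [−1,1]} |f(x) − p(x)|. -/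
/-! If no walk of length at most `k` joins `i` to `j`, then the `(i, j)` entry of every power
`A ^ m` with `m ≤ k` vanishes, hence so does that of `p(A)` for `deg p ≤ k`. Thus the `(i, j)` entry
of `f(A)` is that of `(f - p)(A)`, which is bounded by `‖(f - p)(A)‖ ≤ sup_{[-1,1]} |f - p|`: matrix
entries are dominated by the C⋆-norm, and the functional calculus is isometric. -/

open Polynomial

namespace Matrix

variable {V : Type*} [Fintype V]

/-- A faithful image carries the unique C⋆-norm of `CStarMatrix`, which dominates the entries. -/
theorem norm_apply_le_norm_map_s15 {A₀ 𝒜 F : Type*} [CStarAlgebra A₀] [NonUnitalCStarAlgebra 𝒜]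
    [FunLike F (Matrix V V A₀) 𝒜] [NonUnitalAlgHomClass F ℂ (Matrix V V A₀) 𝒜]
    [StarHomClass F (Matrix V V A₀) 𝒜] (φ : F) (hφ : Function.Injective φ)
    (M : Matrix V V A₀) (i j : V) : ‖M i j‖ ≤ ‖φ M‖ := by
  let := CStarAlgebra.spectralOrder A₀
  let := CStarAlgebra.spectralOrderedRing A₀
  let ψ : CStarMatrix V V A₀ →⋆ₙₐ[ℂ] 𝒜 :=
    (φ : Matrix V V A₀ →⋆ₙₐ[ℂ] 𝒜).comp
      CStarMatrix.ofMatrixStarAlgEquiv.symm.toNonUnitalStarAlgHom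
  have hψ : Function.Injective ψ := hφ.comp CStarMatrix.ofMatrixStarAlgEquiv.symm.injective
  calc ‖M i j‖ ≤ ‖CStarMatrix.ofMatrix M‖ := CStarMatrix.norm_entry_le_norm
    _ = ‖φ M‖ := (NonUnitalStarAlgHom.norm_map ψ hψ _).symm

variable {α : Type*} [DecidableEq V]

theorem pow_apply_eq_zero_of_not_exists_walk [Semiring α] {G : SimpleGraph V}
    {A : Matrix V V α} (hA : ∀ i j, i ≠ j → A i j ≠ 0 → G.Adj i j) {i : V} :
    ∀ {m : ℕ} {j : V}, (¬ ∃ w : G.Walk i j, w.length ≤ m) → (A ^ m) i j = 0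
  | 0, j, hwalk => by
    have hij : i ≠ j := by
      rintro rfl
      exact hwalk ⟨.nil, le_rfl⟩
    simp [one_apply_ne hij]
  | m + 1, j, hwalk => by
    rw [pow_succ, mul_apply]
    refine Finset.sum_eq_zero fun l _ => ?_
    by_cases hlj : A l j = 0
    · rw [hlj, mul_zero]
    suffices hwalk_l : ¬ ∃ w : G.Walk i l, w.length ≤ m by
      rw [pow_apply_eq_zero_of_not_exists_walk hA hwalk_l, zero_mul]
    rintro ⟨w, hw⟩
    by_cases hl : l = j
    · subst hl
      exact hwalk ⟨w, by omega⟩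
    · exact hwalk ⟨w.concat (hA l j hl hlj), by rw [SimpleGraph.Walk.length_concat]; omega⟩

theorem aeval_apply_eq_zero_of_not_exists_walk {R : Type*} [CommSemiring R] [Semiring α]
    [Algebra R α] {G : SimpleGraph V} {A : Matrix V V α}
    (hA : ∀ i j, i ≠ j → A i j ≠ 0 → G.Adj i j) {p : R[X]} {k : ℕ} (hp : p.natDegree ≤ k)
    {i j : V} (hwalk : ¬ ∃ w : G.Walk i j, w.length ≤ k) : aeval A p i j = 0 := by
  rw [aeval_eq_sum_range, sum_apply]
  refine Finset.sum_eq_zero fun m hm => ?_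
  have hmk : m ≤ k := (Nat.lt_succ_iff.mp (Finset.mem_range.mp hm)).trans hp
  rw [smul_apply, pow_apply_eq_zero_of_not_exists_walk hA
    (fun ⟨w, hw⟩ => hwalk ⟨w, hw.trans hmk⟩), smul_zero]

end Matrix

theorem norm_cfc_le_sSup_abs_image {A : Type*} [NormedRing A] [StarRing A] [NormedAlgebra ℝ A]
    [IsometricContinuousFunctionalCalculus ℝ A IsSelfAdjoint] {a : A} {s : Set ℝ}
    (hs : IsCompact s) (hsa : spectrum ℝ a ⊆ s) {g : ℝ → ℝ} (hg : ContinuousOn g s) :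
    ‖cfc g a‖ ≤ sSup ((fun x => |g x|) '' s) := by
  have hbdd : BddAbove ((fun x => |g x|) '' s) := (hs.image_of_continuousOn hg.abs).bddAbove
  refine norm_cfc_le (Real.sSup_nonneg ?_) fun x hx => le_csSup hbdd ⟨x, hsa hx, rfl⟩
  rintro - ⟨x, -, rfl⟩
  exact abs_nonneg _

theorem norm_entry_cfc_le_best_approx_of_sparse_selfAdjoint_general
    {A₀ : Type*} [CStarAlgebra A₀] {n : ℕ}
    {𝒜 : Type*} [CStarAlgebra 𝒜]
    (φ : Matrix (Fin n) (Fin n) A₀ ≃⋆ₐ[ℂ] 𝒜)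
    (G : SimpleGraph (Fin n))
    (A : Matrix (Fin n) (Fin n) A₀) (hA : IsSelfAdjoint A)
    (hspec : spectrum ℝ A ⊆ Set.Icc (-1) 1)
    (hcompat : ∀ i j : Fin n, i ≠ j → A i j ≠ 0 → G.Adj i j)
    (f : ℝ → ℝ) (hf : ContinuousOn f (Set.Icc (-1) 1))
    (k : ℕ) (p : Polynomial ℝ) (hp : p.degree ≤ k)
    (i j : Fin n) (hwalk : ¬ ∃ w : G.Walk i j, w.length ≤ k) :
    ‖(φ.symm (cfc f (φ A))) i j‖ ≤
      sSup ((fun x => |f x - p.eval x|) '' Set.Icc (-1 : ℝ) 1) := by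
  have hφA : IsSelfAdjoint (φ A) := hA.map φ
  let φℝ : Matrix (Fin n) (Fin n) A₀ ≃ₐ[ℝ] 𝒜 :=
    (AlgEquivClass.toAlgEquiv φ : Matrix (Fin n) (Fin n) A₀ ≃ₐ[ℂ] 𝒜).restrictScalars ℝ
  have hspec_φA : spectrum ℝ (φ A) ⊆ Set.Icc (-1) 1 :=
    (AlgEquiv.spectrum_eq φℝ A).subset.trans hspec
  have hpA : aeval A p i j = 0 :=
    Matrix.aeval_apply_eq_zero_of_not_exists_walk hcompat (natDegree_le_iff_degree_le.mpr hp) hwalk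
  have hφ_aeval : aeval (φ A) p = φ (aeval A p) := aeval_algHom_apply φℝ A p
  have hsplit :
      φ.symm (cfc f (φ A)) = φ.symm (cfc (fun x => f x - p.eval x) (φ A)) + aeval A p := by
    rw [cfc_sub f _ (φ A) (hf.mono hspec_φA), cfc_polynomial p (φ A) hφA, hφ_aeval, map_sub,
      φ.symm_apply_apply, sub_add_cancel]
  calc ‖φ.symm (cfc f (φ A)) i j‖ = ‖φ.symm (cfc (fun x => f x - p.eval x) (φ A)) i j‖ := by
        rw [hsplit, Matrix.add_apply, hpA, add_zero]
    _ ≤ ‖cfc (fun x => f x - p.eval x) (φ A)‖ :=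
        (Matrix.norm_apply_le_norm_map_s15 φ φ.injective _ i j).trans_eq (by rw [φ.apply_symm_apply])
    _ ≤ _ := norm_cfc_le_sSup_abs_image isCompact_Icc hspec_φA (hf.sub p.continuous.continuousOn)

/-- Let `A ∈ Mₙ(A₀)` be selfadjoint with spectrum in `[-1,1]` and sparsity
pattern compatible with a simple graph `G`, and let `f : ℝ → ℝ` be continuous on `[-1,1]`.
(The C*-algebra `Mₙ(A₀)` is realized via a *-isomorphism `φ` onto a C*-algebra `𝒜`, and
`f(A) = φ.symm (cfc f (φ A))` is given by the continuous functional calculus.)  Then for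
every `k ≥ 0`, every real polynomial `p` of degree at most `k`, and every pair `i ≠ j` such
that there is no walk in `G` from `i` to `j` of length at most `k`,
`‖[f(A)]_{ij}‖ ≤ sup_{x ∈ [-1,1]} |f(x) - p(x)|`. -/
theorem norm_entry_cfc_le_best_approx_of_sparse_selfAdjoint
    {A₀ : Type*} [CStarAlgebra A₀] {n : ℕ}
    {𝒜 : Type*} [CStarAlgebra 𝒜]
    (φ : Matrix (Fin n) (Fin n) A₀ ≃⋆ₐ[ℂ] 𝒜)
    (G : SimpleGraph (Fin n))
    (A : Matrix (Fin n) (Fin n) A₀) (hA : IsSelfAdjoint A)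
    (hspec : spectrum ℝ A ⊆ Set.Icc (-1) 1)
    (hcompat : ∀ i j : Fin n, i ≠ j → A i j ≠ 0 → G.Adj i j)
    (f : ℝ → ℝ) (hf : ContinuousOn f (Set.Icc (-1) 1))
    (k : ℕ) (p : Polynomial ℝ) (hp : p.degree ≤ k)
    (i j : Fin n) (hij : i ≠ j) (hwalk : ¬ ∃ w : G.Walk i j, w.length ≤ k) :
    ‖(φ.symm (cfc f (φ A))) i j‖ ≤
      sSup ((fun x => |f x - p.eval x|) '' Set.Icc (-1 : ℝ) 1) :=
  norm_entry_cfc_le_best_approx_of_sparse_selfAdjoint_general φ G A hA hspec hcompat f hf k p hp i j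
    hwalk
end
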